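/- arXiv:0801.4099 — 2 statements merged into one kernel-verified Lean document; each statement's English description precedes it below -/
import Mathlib

section
/- Let (𝒜, {·,·}) be a Poisson algebra over R and let D_𝒜 be the 𝒜-module of Kähler differentials of 𝒜. Then the formula [a du, b dv] = a{u,b} dv + b{a,v} du + ab d{u,v} defines an R-bilinear Lie bracket on D_𝒜, and together with the map π^♯: D_𝒜 → Der(𝒜) determined by π^♯(du)(v) = {u,v}, the pair (𝒜, D_𝒜) is a Lie-Rinehart algebra. -/
/-!
The bracket is the Koszul bracket `[ω, η] = L_{π♯ω} η - L_{π♯η} ω - d (ι_{π♯ω} η)`, where the Lie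
derivative `L_X` of Kähler forms along a derivation `X` is obtained from the universal property of
`Ω[A⁄R]`, applied to the derivation `u ↦ (du, d(Xu))` into `Ω × Ω` with the action twisted by `X`.
Each identity is then reduced to exact forms: in every argument its defect is `A`-linear (the anchor
terms produced by the Leibniz rules cancel), and an `A`-linear map on `Ω[A⁄R]` vanishing on `dA`
vanishes. On exact forms the identities are the antisymmetry, Leibniz rule and Jacobi identity of
`{·,·}`.
-/

section KoszulBracket

open KaehlerDifferential

variable {R A : Type*} [CommRing R] [CommRing A] [Algebra R A]

namespace KaehlerDifferential

theorem eq_zero_of_map_D_eq_zero {M : Type*} [AddCommGroup M] [Module A M] (F : Ω[A⁄R] → M)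
    (hadd : ∀ ω η, F (ω + η) = F ω + F η) (hsmul : ∀ (a : A) ω, F (a • ω) = a • F ω)
    (hD : ∀ u, F (D R A u) = 0) (ω : Ω[A⁄R]) : F ω = 0 := by
  have hω : ω ∈ Submodule.span A (Set.range (D R A)) := by
    rw [span_range_derivation]; trivial
  induction hω using Submodule.span_induction with
  | mem _ h => obtain ⟨u, rfl⟩ := h; exact hD u
  | zero => simpa using hsmul 0 0
  | add x y _ _ hx hy => rw [hadd, hx, hy, add_zero]
  | smul a x _ hx => rw [hsmul, hx, smul_zero]

end KaehlerDifferential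

namespace Derivation

section Lift

variable {M : Type*} [AddCommGroup M] [Module A M] [Module R M] [IsScalarTower R A M]

theorem liftKaehlerDifferential_add (X Y : Derivation R A M) :
    (X + Y).liftKaehlerDifferential = X.liftKaehlerDifferential + Y.liftKaehlerDifferential :=
  (linearMapEquivDerivation R A).symm.map_add X Y

theorem liftKaehlerDifferential_smul (a : A) (X : Derivation R A M) :
    (a • X).liftKaehlerDifferential = a • X.liftKaehlerDifferential :=
  (linearMapEquivDerivation R A).symm.map_smul a X

end Lift

theorem lie_smul_right (X Y : Derivation R A A) (a : A) :
    ⁅X, a • Y⁆ = a • ⁅X, Y⁆ + X a • Y := by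
  ext w
  simp only [commutator_apply, smul_apply, add_apply, smul_eq_mul, X.leibniz]
  ring

/-- `M × M` with `a • (x, y) = (a • x, a • y + X a • x)`: the dual numbers `M[ε]`, with `A` acting
through `a ↦ a + X(a) ε`. -/
def Twisted (_X : Derivation R A A) (M : Type*) : Type _ := M × M

namespace Twisted

variable (X : Derivation R A A) {M : Type*}

def fst (m : Twisted X M) : M := Prod.fst (α := M) (β := M) m
def snd (m : Twisted X M) : M := Prod.snd (α := M) (β := M) m
def mk (x y : M) : Twisted X M := (x, y)

@[simp] theorem fst_mk (x y : M) : fst X (mk X x y) = x := rfl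
@[simp] theorem snd_mk (x y : M) : snd X (mk X x y) = y := rfl

theorem ext {m n : Twisted X M} (h₁ : fst X m = fst X n) (h₂ : snd X m = snd X n) : m = n :=
  Prod.ext (α := M) (β := M) h₁ h₂

variable [AddCommGroup M]

instance : AddCommGroup (Twisted X M) := inferInstanceAs (AddCommGroup (M × M))

@[simp] theorem fst_zero : fst X (0 : Twisted X M) = 0 := rfl
@[simp] theorem snd_zero : snd X (0 : Twisted X M) = 0 := rfl
@[simp] theorem fst_add (m n : Twisted X M) : fst X (m + n) = fst X m + fst X n := rfl
@[simp] theorem snd_add (m n : Twisted X M) : snd X (m + n) = snd X m + snd X n := rfl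

instance [Module R M] : Module R (Twisted X M) := inferInstanceAs (Module R (M × M))

@[simp] theorem snd_smul_of_tower [Module R M] (r : R) (m : Twisted X M) :
    snd X (r • m) = r • snd X m := rfl

def sndₗ [Module R M] : Twisted X M →ₗ[R] M where
  toFun := snd X
  map_add' := snd_add X
  map_smul' _ _ := rfl

@[simp] theorem sndₗ_apply [Module R M] (m : Twisted X M) : sndₗ X m = snd X m := rfl

variable [Module A M]

instance : SMul A (Twisted X M) :=
  ⟨fun a m => mk X (a • fst X m) (a • snd X m + X a • fst X m)⟩

@[simp] theorem fst_smul (a : A) (m : Twisted X M) : fst X (a • m) = a • fst X m := rfl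
@[simp] theorem snd_smul (a : A) (m : Twisted X M) :
    snd X (a • m) = a • snd X m + X a • fst X m := rfl

instance : Module A (Twisted X M) where
  one_smul m := ext X (one_smul A _) (by simp)
  mul_smul a b m := ext X (mul_smul a b _) (by simp only [snd_smul, fst_smul, X.leibniz]; module)
  smul_zero a := ext X (smul_zero a) (by simp)
  smul_add a m n := ext X (smul_add a _ _) (by simp only [snd_smul, snd_add, fst_add]; module)
  add_smul a b m := ext X (add_smul a b _) (by simp only [snd_smul, snd_add, map_add]; module)
  zero_smul m := ext X (zero_smul A _) (by simp)

instance [Module R M] [IsScalarTower R A M] : IsScalarTower R A (Twisted X M) where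
  smul_assoc r a m := ext X (smul_assoc r a (fst X m))
    (by simp only [snd_smul, snd_smul_of_tower, X.map_smul, smul_assoc, smul_add])

end Twisted

section LieDerivative

variable (X : Derivation R A A)

noncomputable def toTwisted : Derivation R A (Twisted X Ω[A⁄R]) where
  toFun u := Twisted.mk X (D R A u) (D R A (X u))
  map_add' u v := Twisted.ext X (map_add _ u v) (by simp)
  map_smul' r u := Twisted.ext X (map_smul _ r u) (by simp)
  map_one_eq_zero' := Twisted.ext X (D R A).map_one_eq_zero (by simp)
  leibniz' a b := Twisted.ext X ((D R A).leibniz a b) (by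
    simp only [LinearMap.coe_mk, AddHom.coe_mk, Twisted.snd_mk, Twisted.snd_add, Twisted.snd_smul,
      Twisted.fst_mk, X.leibniz, map_add, smul_eq_mul, (D R A).leibniz]
    module)

noncomputable def lieDeriv : Ω[A⁄R] →ₗ[R] Ω[A⁄R] :=
  Twisted.sndₗ X ∘ₗ (toTwisted X).liftKaehlerDifferential.restrictScalars R

theorem fst_liftKaehlerDifferential_toTwisted (ω : Ω[A⁄R]) :
    Twisted.fst X ((toTwisted X).liftKaehlerDifferential ω) = ω := by
  refine sub_eq_zero.1 <| eq_zero_of_map_D_eq_zero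
    (fun ω => Twisted.fst X ((toTwisted X).liftKaehlerDifferential ω) - ω) ?_ ?_ ?_ ω
  · intro ω η; simp only [map_add, Twisted.fst_add]; abel
  · intro a ω; simp only [LinearMap.map_smul, Twisted.fst_smul, smul_sub]
  · intro u; simp [toTwisted]

@[simp] theorem lieDeriv_D (u : A) : lieDeriv X (D R A u) = D R A (X u) := by
  simp [lieDeriv, toTwisted]

theorem lieDeriv_apply_smul (a : A) (ω : Ω[A⁄R]) :
    lieDeriv X (a • ω) = a • lieDeriv X ω + X a • ω := by
  simp [lieDeriv, fst_liftKaehlerDifferential_toTwisted]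

theorem lieDeriv_add (Y : Derivation R A A) (ω : Ω[A⁄R]) :
    lieDeriv (X + Y) ω = lieDeriv X ω + lieDeriv Y ω := by
  refine sub_eq_zero.1 <| eq_zero_of_map_D_eq_zero
    (fun ω => lieDeriv (X + Y) ω - (lieDeriv X ω + lieDeriv Y ω)) ?_ ?_ ?_ ω
  · intro ω η; simp only [map_add]; abel
  · intro a ω; simp only [lieDeriv_apply_smul, add_apply, add_smul]; module
  · intro u; simp

theorem lieDeriv_smul (a : A) (ω : Ω[A⁄R]) :
    lieDeriv (a • X) ω = a • lieDeriv X ω + X.liftKaehlerDifferential ω • D R A a := by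
  refine sub_eq_zero.1 <| eq_zero_of_map_D_eq_zero
    (fun ω => lieDeriv (a • X) ω - (a • lieDeriv X ω + X.liftKaehlerDifferential ω • D R A a))
    ?_ ?_ ?_ ω
  · intro ω η; simp only [map_add, add_smul]; module
  · intro b ω
    simp only [lieDeriv_apply_smul, LinearMap.map_smul, smul_apply, smul_eq_mul]
    module
  · intro u; simp [(D R A).leibniz]

end LieDerivative
end Derivation

namespace KaehlerDifferential

section Poisson

variable (P : A →ₗ[R] A →ₗ[R] A)
  (hanti : ∀ u v : A, P u v = - P v u)
  (hleib : ∀ u v w : A, P u (v * w) = P u v * w + v * P u w)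

def hamiltonian (u : A) : Derivation R A A :=
  Derivation.mk' (P u) fun v w => by rw [hleib, smul_eq_mul, smul_eq_mul]; ring

@[simp] theorem hamiltonian_apply (u v : A) : hamiltonian P hleib u v = P u v := rfl

def hamiltonianDerivation : Derivation R A (Derivation R A A) :=
  Derivation.mk'
    { toFun := hamiltonian P hleib
      map_add' := fun u v => by ext; simp
      map_smul' := fun r u => by ext; simp }
    fun a b => by
      ext w
      simp only [LinearMap.coe_mk, AddHom.coe_mk, hamiltonian_apply, Derivation.add_apply,
        Derivation.smul_apply, smul_eq_mul]
      linear_combination hanti (a * b) w - hleib w a b - b * hanti a w - a * hanti b w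

noncomputable def anchor : Ω[A⁄R] →ₗ[A] Derivation R A A :=
  (hamiltonianDerivation P hanti hleib).liftKaehlerDifferential

@[simp] theorem anchor_D (u : A) :
    anchor P hanti hleib (D R A u) = hamiltonian P hleib u :=
  Derivation.liftKaehlerDifferential_comp_D _ u

local notation "♯" => anchor P hanti hleib

theorem liftKaehlerDifferential_anchor_comm (ω η : Ω[A⁄R]) :
    (♯ η).liftKaehlerDifferential ω = -(♯ ω).liftKaehlerDifferential η := by
  let pairing := (linearMapEquivDerivation R A).symm.toLinearMap ∘ₗ ♯
  have hskew : pairing = -pairing.flip := by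
    ext u v
    simpa [pairing] using hanti u v
  exact LinearMap.congr_fun₂ hskew η ω

noncomputable def koszulBracket (ω η : Ω[A⁄R]) : Ω[A⁄R] :=
  (♯ ω).lieDeriv η - (♯ η).lieDeriv ω - D R A ((♯ ω).liftKaehlerDifferential η)

local notation "𝔹" => koszulBracket P hanti hleib

theorem koszulBracket_add_left (ω₁ ω₂ η : Ω[A⁄R]) : 𝔹 (ω₁ + ω₂) η = 𝔹 ω₁ η + 𝔹 ω₂ η := by
  simp only [koszulBracket, map_add, Derivation.lieDeriv_add,
    Derivation.liftKaehlerDifferential_add, LinearMap.add_apply]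
  abel

theorem koszulBracket_add_right (ω η₁ η₂ : Ω[A⁄R]) : 𝔹 ω (η₁ + η₂) = 𝔹 ω η₁ + 𝔹 ω η₂ := by
  simp only [koszulBracket, map_add, Derivation.lieDeriv_add]
  abel

theorem koszulBracket_skew (ω η : Ω[A⁄R]) : 𝔹 ω η = -𝔹 η ω := by
  simp only [koszulBracket, liftKaehlerDifferential_anchor_comm P hanti hleib ω η, map_neg]
  abel

theorem koszulBracket_smul_right (a : A) (ω η : Ω[A⁄R]) :
    𝔹 ω (a • η) = a • 𝔹 ω η + ♯ ω a • η := by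
  simp only [koszulBracket, LinearMap.map_smul, Derivation.lieDeriv_apply_smul,
    Derivation.lieDeriv_smul, smul_eq_mul, (D R A).leibniz,
    liftKaehlerDifferential_anchor_comm P hanti hleib ω η]
  module

theorem koszulBracket_smul_left (a : A) (ω η : Ω[A⁄R]) :
    𝔹 (a • ω) η = a • 𝔹 ω η - ♯ η a • ω := by
  rw [koszulBracket_skew, koszulBracket_smul_right, koszulBracket_skew P hanti hleib η ω]
  module

theorem koszulBracket_D_D (u v : A) : 𝔹 (D R A u) (D R A v) = D R A (P u v) := by
  simp [koszulBracket, hanti v u]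

theorem koszulBracket_smul_D_smul_D (a b u v : A) :
    𝔹 (a • D R A u) (b • D R A v) =
      (a * P u b) • D R A v + (b * P a v) • D R A u + (a * b) • D R A (P u v) := by
  simp only [koszulBracket_smul_left, koszulBracket_smul_right, koszulBracket_D_D, map_smul,
    anchor_D, Derivation.smul_apply, hamiltonian_apply, smul_eq_mul, hanti v a]
  module

theorem koszulBracket_neg_right (ω η : Ω[A⁄R]) : 𝔹 ω (-η) = -𝔹 ω η := by
  simpa using koszulBracket_smul_right P hanti hleib (-1) ω η

theorem hamiltonian_P (hjac : ∀ u v w : A, P u (P v w) = P (P u v) w + P v (P u w)) (u v : A) :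
    hamiltonian P hleib (P u v) = ⁅hamiltonian P hleib u, hamiltonian P hleib v⁆ := by
  ext w
  simp only [hamiltonian_apply, Derivation.commutator_apply, hjac u v w]
  ring

theorem anchor_koszulBracket (hjac : ∀ u v w : A, P u (P v w) = P (P u v) w + P v (P u w))
    (ω η : Ω[A⁄R]) : ♯ (𝔹 ω η) = ⁅♯ ω, ♯ η⁆ := by
  have tensorial : ∀ ω, (∀ v, ♯ (𝔹 ω (D R A v)) = ⁅♯ ω, ♯ (D R A v)⁆) →
      ∀ η, ♯ (𝔹 ω η) = ⁅♯ ω, ♯ η⁆ := by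
    intro ω hD η
    refine sub_eq_zero.1 <| eq_zero_of_map_D_eq_zero (fun η => ♯ (𝔹 ω η) - ⁅♯ ω, ♯ η⁆)
      ?_ ?_ (fun v => sub_eq_zero.2 (hD v)) η
    · intro η₁ η₂
      simp only [koszulBracket_add_right, map_add, lie_add]
      abel
    · intro a η
      simp only [koszulBracket_smul_right, map_add, map_smul, Derivation.lie_smul_right]
      module
  refine tensorial ω (fun v => ?_) η
  have hDv : ∀ η, ♯ (𝔹 (D R A v) η) = ⁅♯ (D R A v), ♯ η⁆ := tensorial _ fun u => by
    rw [koszulBracket_D_D P hanti hleib, anchor_D, anchor_D, anchor_D, hamiltonian_P P hleib hjac]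
  rw [koszulBracket_skew, map_neg, hDv, ← lie_skew, neg_neg]

noncomputable def koszulJacobiator (ω η ζ : Ω[A⁄R]) : Ω[A⁄R] :=
  𝔹 ω (𝔹 η ζ) + 𝔹 η (𝔹 ζ ω) + 𝔹 ζ (𝔹 ω η)

local notation "𝕁" => koszulJacobiator P hanti hleib

theorem koszulJacobiator_cycle (ω η ζ : Ω[A⁄R]) : 𝕁 ω η ζ = 𝕁 η ζ ω := by
  simp only [koszulJacobiator]
  abel

theorem koszulJacobiator_add_right (ω η ζ₁ ζ₂ : Ω[A⁄R]) :
    𝕁 ω η (ζ₁ + ζ₂) = 𝕁 ω η ζ₁ + 𝕁 ω η ζ₂ := by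
  simp only [koszulJacobiator, koszulBracket_add_left, koszulBracket_add_right]
  abel

theorem koszulJacobiator_smul_right
    (hjac : ∀ u v w : A, P u (P v w) = P (P u v) w + P v (P u w)) (c : A) (ω η ζ : Ω[A⁄R]) :
    𝕁 ω η (c • ζ) = c • 𝕁 ω η ζ := by
  simp only [koszulJacobiator, koszulBracket_smul_right, koszulBracket_smul_left, sub_eq_add_neg,
    koszulBracket_add_right, koszulBracket_neg_right,
    anchor_koszulBracket P hanti hleib hjac, Derivation.commutator_apply]
  rw [koszulBracket_skew P hanti hleib ζ ω]
  module

theorem koszulJacobiator_D_D_D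
    (hjac : ∀ u v w : A, P u (P v w) = P (P u v) w + P v (P u w)) (u v w : A) :
    𝕁 (D R A u) (D R A v) (D R A w) = 0 := by
  have hcyclic : P u (P v w) + P v (P w u) + P w (P u v) = 0 := by
    rw [hanti w u, map_neg, hanti w (P u v)]
    linear_combination hjac u v w
  simp only [koszulJacobiator, koszulBracket_D_D P hanti hleib, ← map_add, hcyclic, map_zero]

theorem koszulJacobiator_eq_zero
    (hjac : ∀ u v w : A, P u (P v w) = P (P u v) w + P v (P u w)) (ω η ζ : Ω[A⁄R]) :
    𝕁 ω η ζ = 0 := by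
  have tensorial : ∀ ω η, (∀ w, 𝕁 ω η (D R A w) = 0) → ∀ ζ, 𝕁 ω η ζ = 0 := fun ω η hD =>
    eq_zero_of_map_D_eq_zero _ (koszulJacobiator_add_right P hanti hleib ω η)
      (koszulJacobiator_smul_right P hanti hleib hjac · ω η) hD
  have h₂ : ∀ u v ζ, 𝕁 (D R A u) (D R A v) ζ = 0 := fun u v =>
    tensorial _ _ (koszulJacobiator_D_D_D P hanti hleib hjac u v)
  have h₁ : ∀ u η ζ, 𝕁 (D R A u) η ζ = 0 := fun u η ζ => by
    rw [koszulJacobiator_cycle, koszulJacobiator_cycle]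
    exact tensorial _ _ (fun v => by rw [koszulJacobiator_cycle, h₂]) η
  rw [koszulJacobiator_cycle]
  exact tensorial _ _ (fun w => by rw [koszulJacobiator_cycle, koszulJacobiator_cycle, h₁]) ω

theorem koszulBracket_jacobi
    (hjac : ∀ u v w : A, P u (P v w) = P (P u v) w + P v (P u w)) (ω η ζ : Ω[A⁄R]) :
    𝔹 ω (𝔹 η ζ) = 𝔹 (𝔹 ω η) ζ + 𝔹 η (𝔹 ω ζ) := by
  have h := koszulJacobiator_eq_zero P hanti hleib hjac ω η ζ
  rw [koszulJacobiator, koszulBracket_skew P hanti hleib ζ ω, koszulBracket_neg_right,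
    koszulBracket_skew P hanti hleib ζ] at h
  rw [← sub_eq_zero, ← h]
  abel

end Poisson

end KaehlerDifferential

end KoszulBracket

/-- For a Poisson algebra `(𝒜, {·,·})` over `R`, the formula
`[a du, b dv] = a{u,b} dv + b{a,v} du + ab d{u,v}` defines an `R`-bilinear Lie
bracket on the module of Kähler differentials `Ω[𝒜⁄R]`, and together with the
anchor `π^♯` determined by `π^♯(du)(v) = {u,v}` the pair `(𝒜, Ω[𝒜⁄R])` becomes
a Lie–Rinehart algebra. -/
theorem kaehler_lieRinehart_of_poisson
    (R 𝒜 : Type) [CommRing R] [CommRing 𝒜] [Algebra R 𝒜]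
    (P : 𝒜 →ₗ[R] 𝒜 →ₗ[R] 𝒜)
    (hanti : ∀ u v : 𝒜, P u v = - P v u)
    (hjac : ∀ u v w : 𝒜, P u (P v w) = P (P u v) w + P v (P u w))
    (hleib : ∀ u v w : 𝒜, P u (v * w) = P u v * w + v * P u w) :
    ∃ (B : Ω[𝒜⁄R] → Ω[𝒜⁄R] → Ω[𝒜⁄R]) (sharp : Ω[𝒜⁄R] →ₗ[𝒜] Derivation R 𝒜 𝒜),
      -- `B` is `R`-bilinear:
      (∀ ω₁ ω₂ η : Ω[𝒜⁄R], B (ω₁ + ω₂) η = B ω₁ η + B ω₂ η) ∧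
      (∀ ω η₁ η₂ : Ω[𝒜⁄R], B ω (η₁ + η₂) = B ω η₁ + B ω η₂) ∧
      (∀ (r : R) (ω η : Ω[𝒜⁄R]),
        B (algebraMap R 𝒜 r • ω) η = algebraMap R 𝒜 r • B ω η ∧
        B ω (algebraMap R 𝒜 r • η) = algebraMap R 𝒜 r • B ω η) ∧
      -- `B` is a Lie bracket:
      (∀ ω η : Ω[𝒜⁄R], B ω η = - B η ω) ∧
      (∀ ω η ζ : Ω[𝒜⁄R], B ω (B η ζ) = B (B ω η) ζ + B η (B ω ζ)) ∧
      -- the anchor is determined by `π^♯(du)(v) = {u,v}`: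
      (∀ u v : 𝒜, sharp (KaehlerDifferential.D R 𝒜 u) v = P u v) ∧
      -- the defining formula `[a du, b dv] = a{u,b} dv + b{a,v} du + ab d{u,v}`:
      (∀ a b u v : 𝒜,
        B (a • KaehlerDifferential.D R 𝒜 u) (b • KaehlerDifferential.D R 𝒜 v) =
          (a * P u b) • KaehlerDifferential.D R 𝒜 v
            + (b * P a v) • KaehlerDifferential.D R 𝒜 u
            + (a * b) • KaehlerDifferential.D R 𝒜 (P u v)) ∧
      -- the Lie–Rinehart compatibility conditions:
      (∀ (a : 𝒜) (ω η : Ω[𝒜⁄R]), B ω (a • η) = a • B ω η + (sharp ω a) • η) ∧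
      (∀ ω η : Ω[𝒜⁄R], sharp (B ω η) = ⁅sharp ω, sharp η⁆) := by
  open KaehlerDifferential in
  refine ⟨koszulBracket P hanti hleib, anchor P hanti hleib,
    koszulBracket_add_left P hanti hleib, koszulBracket_add_right P hanti hleib,
    fun r ω η => ⟨?_, ?_⟩, koszulBracket_skew P hanti hleib,
    koszulBracket_jacobi P hanti hleib hjac, fun u v => by simp,
    koszulBracket_smul_D_smul_D P hanti hleib, koszulBracket_smul_right P hanti hleib,
    anchor_koszulBracket P hanti hleib hjac⟩
  · rw [koszulBracket_smul_left, Derivation.map_algebraMap, zero_smul, sub_zero]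
  · rw [koszulBracket_smul_right, Derivation.map_algebraMap, zero_smul, add_zero]
end

section
/- Let (𝒜,{·,·}) be a Poisson algebra over R, with Lie-Rinehart algebra (𝒜, D_𝒜) where D_𝒜 carries the bracket [a du, b dv] = a{u,b} dv + b{a,v} du + ab d{u,v} and anchor π^♯(du)(v)={u,v}. Then π^♯: D_𝒜 → Der(𝒜) is a morphism of Lie algebras, i.e., π^♯([ω,η]) = [π^♯(ω), π^♯(η)] for all ω,η ∈ D_𝒜. -/
/-!
On a form `a • du` the anchor acts as `w ↦ a {u, w}`. Evaluating both sides of the identity on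
`a • du` and `b • dv` at `w`, the Leibniz rule expands `[π^♯(a du), π^♯(b dv)] w` into the three
terms of `π^♯[a du, b dv] w`, the term `a b {{u, v}, w}` arising from the Jacobi identity and
`b {a, v} {u, w}` from antisymmetry. Both sides are biadditive in `(ω, η)`, and the forms `a • du`
generate `Ω[𝒜⁄R]` as an additive monoid, so the identity holds everywhere.
-/

open KaehlerDifferential

namespace AddMonoidHom

variable {A M N P : Type*} [Semiring A] [AddCommMonoid M] [Module A M] [AddCommMonoid N]
  [Module A N] [AddCommMonoid P]

theorem ext_of_span_eq_top {s : Set M} (hs : Submodule.span A s = ⊤) {f g : M →+ P}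
    (h : ∀ (a : A), ∀ x ∈ s, f (a • x) = g (a • x)) : f = g := by
  ext x
  induction (hs ▸ Submodule.mem_top : x ∈ Submodule.span A s)
    using Submodule.closure_induction with
  | zero => simp only [map_zero]
  | add x y _ _ hx hy => simp only [map_add, hx, hy]
  | smul_mem a x hx => exact h a x hx

theorem ext₂_of_span_eq_top {s : Set M} {t : Set N} (hs : Submodule.span A s = ⊤)
    (ht : Submodule.span A t = ⊤) {f g : M →+ N →+ P}
    (h : ∀ (a : A), ∀ x ∈ s, ∀ (b : A), ∀ y ∈ t, f (a • x) (b • y) = g (a • x) (b • y)) :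
    f = g :=
  ext_of_span_eq_top hs fun a x hx => ext_of_span_eq_top ht fun b y hy => h a x hx b y hy

end AddMonoidHom

section Anchor

variable {R 𝒜 : Type*} [CommRing R] [CommRing 𝒜] [Algebra R 𝒜] {P : 𝒜 →ₗ[R] 𝒜 →ₗ[R] 𝒜}
  {sharp : Ω[𝒜⁄R] →ₗ[𝒜] Derivation R 𝒜 𝒜}

theorem anchor_smul_D_apply (hsharp : ∀ u v : 𝒜, sharp (D R 𝒜 u) v = P u v) (a u w : 𝒜) :
    sharp (a • D R 𝒜 u) w = a * P u w := by
  rw [map_smul, Derivation.smul_apply, hsharp, smul_eq_mul]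

theorem anchor_bracket_smul_D (hanti : ∀ u v : 𝒜, P u v = - P v u)
    (hjac : ∀ u v w : 𝒜, P u (P v w) = P (P u v) w + P v (P u w))
    (hleib : ∀ u v w : 𝒜, P u (v * w) = P u v * w + v * P u w)
    (hsharp : ∀ u v : 𝒜, sharp (D R 𝒜 u) v = P u v) (a b u v : 𝒜) :
    sharp ((a * P u b) • D R 𝒜 v + (b * P a v) • D R 𝒜 u + (a * b) • D R 𝒜 (P u v)) =
      ⁅sharp (a • D R 𝒜 u), sharp (b • D R 𝒜 v)⁆ := by
  ext w
  simp only [map_add, Derivation.add_apply, Derivation.commutator_apply,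
    anchor_smul_D_apply hsharp]
  rw [hleib u b (P v w), hleib v a (P u w), hjac u v w, hanti a v]
  ring

end Anchor

/-- For a Poisson algebra `(𝒜, {·,·})` over `R`, with the bracket
`[a du, b dv] = a{u,b} dv + b{a,v} du + ab d{u,v}` on `Ω[𝒜⁄R]` and the anchor `π^♯`
determined by `π^♯(du)(v) = {u,v}`, the anchor `π^♯ : Ω[𝒜⁄R] → Der(𝒜)` is a morphism
of Lie algebras: `π^♯([ω,η]) = [π^♯ ω, π^♯ η]`. -/
theorem kaehler_anchor_is_lie_morphism
    (R 𝒜 : Type) [CommRing R] [CommRing 𝒜] [Algebra R 𝒜]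
    (P : 𝒜 →ₗ[R] 𝒜 →ₗ[R] 𝒜)
    (hanti : ∀ u v : 𝒜, P u v = - P v u)
    (hjac : ∀ u v w : 𝒜, P u (P v w) = P (P u v) w + P v (P u w))
    (hleib : ∀ u v w : 𝒜, P u (v * w) = P u v * w + v * P u w)
    (B : Ω[𝒜⁄R] → Ω[𝒜⁄R] → Ω[𝒜⁄R])
    (hBadd₁ : ∀ ω₁ ω₂ η : Ω[𝒜⁄R], B (ω₁ + ω₂) η = B ω₁ η + B ω₂ η)
    (hBadd₂ : ∀ ω η₁ η₂ : Ω[𝒜⁄R], B ω (η₁ + η₂) = B ω η₁ + B ω η₂)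
    (hBform : ∀ a b u v : 𝒜,
      B (a • KaehlerDifferential.D R 𝒜 u) (b • KaehlerDifferential.D R 𝒜 v) =
        (a * P u b) • KaehlerDifferential.D R 𝒜 v
          + (b * P a v) • KaehlerDifferential.D R 𝒜 u
          + (a * b) • KaehlerDifferential.D R 𝒜 (P u v))
    (sharp : Ω[𝒜⁄R] →ₗ[𝒜] Derivation R 𝒜 𝒜)
    (hsharp : ∀ u v : 𝒜, sharp (KaehlerDifferential.D R 𝒜 u) v = P u v) :
    ∀ ω η : Ω[𝒜⁄R], sharp (B ω η) = ⁅sharp ω, sharp η⁆ := by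
  let anchorOfBracket : Ω[𝒜⁄R] →+ Ω[𝒜⁄R] →+ Derivation R 𝒜 𝒜 :=
    .mk' (fun ω => .mk' (fun η => sharp (B ω η)) fun η₁ η₂ => by rw [hBadd₂, map_add])
      fun ω₁ ω₂ => by
        ext η : 1
        simp only [AddMonoidHom.mk'_apply, AddMonoidHom.add_apply, hBadd₁, map_add]
  let bracketOfAnchor : Ω[𝒜⁄R] →+ Ω[𝒜⁄R] →+ Derivation R 𝒜 𝒜 :=
    .mk' (fun ω => .mk' (fun η => ⁅sharp ω, sharp η⁆) fun η₁ η₂ => by rw [map_add, lie_add])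
      fun ω₁ ω₂ => by
        ext η : 1
        simp only [AddMonoidHom.mk'_apply, AddMonoidHom.add_apply, map_add, add_lie]
  have hspan := span_range_derivation R 𝒜
  have h : anchorOfBracket = bracketOfAnchor :=
    AddMonoidHom.ext₂_of_span_eq_top hspan hspan <| by
      rintro a _ ⟨u, rfl⟩ b _ ⟨v, rfl⟩
      exact (congrArg sharp (hBform a b u v)).trans
        (anchor_bracket_smul_D hanti hjac hleib hsharp a b u v)
  exact fun ω η => DFunLike.congr_fun (DFunLike.congr_fun h ω) η
end
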